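/- arXiv:1106.4622 — 3 statements merged into one kernel-verified Lean document; each statement's English description precedes it below -/
import Mathlib

section
/- Let N ≥ 2 be an integer and define ζ(N,s) = e^s - ∑_{k=0}^{N-2} s^k/k! = ∑_{k=N-1}^∞ s^k/k!. Then for all real s ≥ 0 and p ≥ 1, (ζ(N,s))^p ≤ ζ(N, p s). -/
/-- The truncated exponential `ζ(N,s) = e^s - ∑_{k=0}^{N-2} s^k/k!`. -/
noncomputable def zeta (N : ℕ) (s : ℝ) : ℝ :=
  Real.exp s - ∑ k ∈ Finset.range (N - 1), s ^ k / (Nat.factorial k : ℝ)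

/-!
Induction on `N`. For `N = 0` the truncated sum is empty and `ζ = exp`, for which the inequality is
an equality. Since `ζ(N+1)' = ζ(N)` and `0 ≤ ζ(N+1) ≤ ζ(N)` on `[0, ∞)`, the inequality passes from
`ζ(N)` to `ζ(N+1)` by a monotonicity argument, started from `0 ≤ ζ(N+1)(0) ≤ 1`.
-/

open Finset Nat Real

/-- The derivative `p g(p x) - p f(x)^(p-1) g(x)` of `f(p x) - f(x)^p` is nonnegative because
`f(x)^(p-1) g(x) ≤ g(x)^p ≤ g(p x)`. -/
theorem rpow_le_apply_mul_of_hasDerivAt {f g : ℝ → ℝ} {p : ℝ} (hp : 1 ≤ p)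
    (hf : ∀ x, HasDerivAt f (g x) x) (hf_nonneg : ∀ x, 0 ≤ x → 0 ≤ f x)
    (hfg : ∀ x, 0 ≤ x → f x ≤ g x) (hg : ∀ x, 0 ≤ x → g x ^ p ≤ g (p * x))
    (hf_zero : f 0 ^ p ≤ f 0) {s : ℝ} (hs : 0 ≤ s) : f s ^ p ≤ f (p * s) := by
  set F : ℝ → ℝ := fun x ↦ f (p * x) - f x ^ p
  have hF : ∀ x, HasDerivAt F (g (p * x) * p - 1 * p * f x ^ (p - 1) * g x) x := fun x ↦
    ((hf (p * x)).comp x ((hasDerivAt_id x).const_mul p) |>.congr_deriv (by simp)).sub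
      (((hf x).rpow_const (Or.inr hp)).congr_deriv (by ring))
  have hF_mono : MonotoneOn F (Set.Ici 0) := by
    refine monotoneOn_of_hasDerivWithinAt_nonneg (convex_Ici 0)
      (HasDerivAt.continuousOn fun x _ ↦ hF x) (fun x _ ↦ (hF x).hasDerivWithinAt) ?_
    rintro x hx
    rw [interior_Ici] at hx
    have hx : 0 ≤ x := le_of_lt hx
    have hgx : 0 ≤ g x := (hf_nonneg x hx).trans (hfg x hx)
    have : f x ^ (p - 1) * g x ≤ g (p * x) := calc
      f x ^ (p - 1) * g x ≤ g x ^ (p - 1) * g x := by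
        gcongr
        exacts [hf_nonneg x hx, hfg x hx]
      _ = g x ^ p := by rw [← rpow_add_one' hgx (by linarith), sub_add_cancel]
      _ ≤ g (p * x) := hg x hx
    nlinarith
  have := hF_mono Set.self_mem_Ici (Set.mem_Ici.2 hs) hs
  simp only [F, mul_zero] at this
  linarith

theorem zeta_of_le_one {N : ℕ} (hN : N ≤ 1) (s : ℝ) : zeta N s = exp s := by
  simp [zeta, Nat.sub_eq_zero_of_le hN]

theorem zeta_nonneg (N : ℕ) {s : ℝ} (hs : 0 ≤ s) : 0 ≤ zeta N s :=
  sub_nonneg.2 (sum_le_exp_of_nonneg hs _)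

theorem zeta_le_exp (N : ℕ) {s : ℝ} (hs : 0 ≤ s) : zeta N s ≤ exp s :=
  sub_le_self _ (sum_nonneg fun _ _ ↦ by positivity)

theorem zeta_succ_le (N : ℕ) {s : ℝ} (hs : 0 ≤ s) : zeta (N + 1) s ≤ zeta N s :=
  sub_le_sub_left (sum_le_sum_of_subset_of_nonneg (range_subset_range.2 (Nat.sub_le _ _))
    fun _ _ _ ↦ by positivity) _

theorem hasDerivAt_sum_range_pow_div_factorial (n : ℕ) (x : ℝ) :
    HasDerivAt (fun y ↦ ∑ k ∈ range (n + 1), y ^ k / (k ! : ℝ))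
      (∑ k ∈ range n, x ^ k / (k ! : ℝ)) x := by
  refine (HasDerivAt.fun_sum fun k _ ↦ (hasDerivAt_pow k x).div_const (k ! : ℝ)).congr_deriv ?_
  rw [sum_range_succ']
  refine (add_eq_left.2 (by simp)).trans (sum_congr rfl fun k _ ↦ ?_)
  rw [factorial_succ, add_tsub_cancel_right]
  push_cast
  field_simp

theorem hasDerivAt_zeta_succ (N : ℕ) (s : ℝ) : HasDerivAt (zeta (N + 1)) (zeta N s) s := by
  rcases N with _ | n
  · rw [funext (zeta_of_le_one le_rfl), zeta_of_le_one zero_le_one]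
    exact hasDerivAt_exp s
  · exact (hasDerivAt_exp s).sub (hasDerivAt_sum_range_pow_div_factorial n s)

theorem zeta_rpow_le_zeta_mul (N : ℕ) {s p : ℝ} (hs : 0 ≤ s) (hp : 1 ≤ p) :
    zeta N s ^ p ≤ zeta N (p * s) := by
  induction N generalizing s with
  | zero => simp [zeta_of_le_one, ← exp_mul, mul_comm]
  | succ N ih =>
    refine rpow_le_apply_mul_of_hasDerivAt hp (hasDerivAt_zeta_succ N)
      (fun _ ↦ zeta_nonneg _) (fun _ ↦ zeta_succ_le N) (fun _ ↦ ih) ?_ hs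
    refine rpow_le_self_of_le_one (zeta_nonneg _ le_rfl) ?_ hp
    simpa using zeta_le_exp (N + 1) le_rfl

theorem stmt1_general (N : ℕ) (s p : ℝ) (hs : 0 ≤ s) (hp : 1 ≤ p) :
    (zeta N s) ^ p ≤ zeta N (p * s) :=
  zeta_rpow_le_zeta_mul N hs hp

theorem stmt1 (N : ℕ) (hN : 2 ≤ N) (s p : ℝ) (hs : 0 ≤ s) (hp : 1 ≤ p) :
    (zeta N s) ^ p ≤ zeta N (p * s) :=
  stmt1_general N s p hs hp
end

section
/- Let N ≥ 2 be an integer, ζ(N,s) = e^s - ∑_{k=0}^{N-2} s^k/k!, and let s, t ≥ 0 and μ, ν > 1 with 1/μ + 1/ν = 1. Then ζ(N, s+t) ≤ (1/μ) ζ(N, μ s) + (1/ν) ζ(N, ν t). -/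
open Finset Nat

lemma hasDerivAt_pow_succ_div_factorial (k : ℕ) (x : ℝ) :
    HasDerivAt (fun y : ℝ => y ^ (k + 1) / (k + 1)!) (x ^ k / k !) x := by
  refine ((hasDerivAt_pow (k + 1) x).div_const _).congr_deriv ?_
  rw [Nat.add_sub_cancel, factorial_succ, cast_mul]
  field_simp

lemma hasDerivAt_sum_range_succ_pow_div_factorial (m : ℕ) (x : ℝ) :
    HasDerivAt (fun y : ℝ => ∑ k ∈ range (m + 1), y ^ k / k !)
      (∑ k ∈ range m, x ^ k / k !) x := by
  induction m with
  | zero => simpa using hasDerivAt_const x (1 : ℝ)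
  | succ m ih =>
    simpa only [← sum_range_succ] using ih.fun_add (hasDerivAt_pow_succ_div_factorial m x)

lemma zeta_zero : zeta 0 = Real.exp := by
  ext; simp [zeta]

lemma zeta_one : zeta 1 = Real.exp := by
  ext; simp [zeta]

lemma zeta_hasDerivAt (m : ℕ) (x : ℝ) : HasDerivAt (zeta (m + 1)) (zeta m x) x := by
  cases m with
  | zero => simpa [zeta_one, zeta_zero] using Real.hasDerivAt_exp x
  | succ n => exact (Real.hasDerivAt_exp x).sub (hasDerivAt_sum_range_succ_pow_div_factorial n x)

lemma zeta_nonneg_s3 (m : ℕ) {x : ℝ} (hx : 0 ≤ x) : 0 ≤ zeta m x :=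
  sub_nonneg.mpr (Real.sum_le_exp_of_nonneg hx _)

lemma zeta_convexOn (N : ℕ) : ConvexOn ℝ (Set.Ici 0) (zeta N) := by
  match N with
  | 0 => exact zeta_zero ▸ convexOn_exp.subset (Set.subset_univ _) (convex_Ici 0)
  | 1 => exact zeta_one ▸ convexOn_exp.subset (Set.subset_univ _) (convex_Ici 0)
  | m + 2 =>
    refine convexOn_of_hasDerivWithinAt2_nonneg (convex_Ici 0)
      (fun x _ => (zeta_hasDerivAt (m + 1) x).continuousAt.continuousWithinAt)
      (fun x _ => (zeta_hasDerivAt (m + 1) x).hasDerivWithinAt)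
      (fun x _ => (zeta_hasDerivAt m x).hasDerivWithinAt) fun x hx => zeta_nonneg_s3 m ?_
    rw [interior_Ici] at hx
    exact hx.le

lemma ConvexOn.le_inv_mul_add_inv_mul {E : Type*} [AddCommGroup E] [Module ℝ E] {D : Set E}
    {f : E → ℝ} (hf : ConvexOn ℝ D f) {s t : E} {μ ν : ℝ} (hμ : 0 < μ) (hν : 0 < ν)
    (hconj : 1 / μ + 1 / ν = 1) (hs : μ • s ∈ D) (ht : ν • t ∈ D) :
    f (s + t) ≤ (1 / μ) * f (μ • s) + (1 / ν) * f (ν • t) := by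
  have h := hf.2 hs ht (by positivity) (by positivity) hconj
  rwa [smul_smul, smul_smul, one_div_mul_cancel hμ.ne', one_div_mul_cancel hν.ne', one_smul,
    one_smul] at h

theorem stmt3_general (N : ℕ) (s t μ ν : ℝ) (hs : 0 ≤ s) (ht : 0 ≤ t)
    (hμ : 1 < μ) (hν : 1 < ν) (hconj : 1 / μ + 1 / ν = 1) :
    zeta N (s + t) ≤ (1 / μ) * zeta N (μ * s) + (1 / ν) * zeta N (ν * t) :=
  (zeta_convexOn N).le_inv_mul_add_inv_mul (by linarith) (by linarith) hconj
    (show 0 ≤ μ * s by positivity) (show 0 ≤ ν * t by positivity)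

theorem stmt3 (N : ℕ) (hN : 2 ≤ N) (s t μ ν : ℝ) (hs : 0 ≤ s) (ht : 0 ≤ t)
    (hμ : 1 < μ) (hν : 1 < ν) (hconj : 1 / μ + 1 / ν = 1) :
    zeta N (s + t) ≤ (1 / μ) * zeta N (μ * s) + (1 / ν) * zeta N (ν * t) :=
  stmt3_general N s t μ ν hs ht hμ hν hconj
end

section
/- Let N ≥ 2, α_0, b_1, b_2 > 0 and suppose f : ℝ^N × [0,∞) → ℝ satisfies |f(x,s)| ≤ b_1 s^{N-1} + b_2 ζ(N, α_0 s^{N/(N-1)}) where ζ(N,t) = e^t - ∑_{k=0}^{N-2} t^k/k!. Then there exist α_1 > α_0 and b_3 > 0 such that for all x ∈ ℝ^N and s ≥ 0, F(x,s) := ∫_0^s f(x,t)dt satisfies F(x,s) ≤ b_3 ζ(N, α_1 s^{N/(N-1)}). -/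
/-!
Since the growth bound is monotone in `s`, `F(x,s) ≤ s·(b₁ s^{N-1} + b₂ ζ(N, α₀ u))` with
`u = s^{N/(N-1)}`. Here `s·s^{N-1} = u^{N-1}` is, up to a constant, the leading term of
`ζ(N, 2α₀u)`, and `s ≤ 1 + u`. Finally `v ζ(N,v) ≤ ζ(N,2v)` termwise in the power series,
because `n + 1 ≤ 2^{n+1}`; with `v = α₀u` this absorbs the factor `u` at the cost of
doubling `α₀`.
-/

open Set

theorem le_one_add_rpow {s p : ℝ} (hs : 0 ≤ s) (hp : 1 ≤ p) : s ≤ 1 + s ^ p := by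
  rcases le_total s 1 with h | h
  · linarith [Real.rpow_nonneg hs p]
  · linarith [Real.self_le_rpow_of_one_le h hp]

theorem rpow_div_sub_one_pow {N : ℕ} (hN : 1 < N) {s : ℝ} (hs : 0 ≤ s) :
    (s ^ ((N : ℝ) / ((N : ℝ) - 1))) ^ (N - 1) = s ^ N := by
  have hN' : (N : ℝ) - 1 ≠ 0 := by
    have : (1 : ℝ) < N := mod_cast hN
    linarith
  rw [← Real.rpow_mul_natCast hs, Nat.cast_sub hN.le, Nat.cast_one, div_mul_cancel₀ _ hN',
    Real.rpow_natCast]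

theorem intervalIntegral.integral_le_mul_of_forall_le {f : ℝ → ℝ} {s C : ℝ} (hs : 0 ≤ s)
    (hf : IntervalIntegrable f MeasureTheory.volume 0 s) (h : ∀ t ∈ Icc 0 s, f t ≤ C) :
    ∫ t in (0 : ℝ)..s, f t ≤ s * C := by
  simpa using intervalIntegral.integral_mono_on hs hf intervalIntegrable_const h

section Zeta

variable (N : ℕ)

theorem zeta_eq_tsum (t : ℝ) :
    zeta N t = ∑' k : ℕ, t ^ (k + (N - 1)) / (k + (N - 1)).factorial := by
  have hexp : Real.exp t = ∑' n : ℕ, t ^ n / n.factorial := by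
    rw [Real.exp_eq_exp_ℝ, NormedSpace.exp_eq_tsum_div]
  rw [zeta, hexp, ← (Real.summable_pow_div_factorial t).sum_add_tsum_nat_add (N - 1),
    add_sub_cancel_left]

theorem summable_zeta_terms (t : ℝ) :
    Summable fun k : ℕ => t ^ (k + (N - 1)) / (k + (N - 1)).factorial :=
  (summable_nat_add_iff (f := fun n : ℕ => t ^ n / n.factorial) (N - 1)).2
    (Real.summable_pow_div_factorial t)

theorem zeta_nonneg_s15 {t : ℝ} (ht : 0 ≤ t) : 0 ≤ zeta N t := by
  rw [zeta_eq_tsum]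
  exact tsum_nonneg fun k => by positivity

@[gcongr]
theorem zeta_le_zeta {a b : ℝ} (ha : 0 ≤ a) (hab : a ≤ b) : zeta N a ≤ zeta N b := by
  rw [zeta_eq_tsum, zeta_eq_tsum]
  exact (summable_zeta_terms N a).tsum_le_tsum (fun k => by gcongr) (summable_zeta_terms N b)

theorem pow_div_factorial_le_zeta {t : ℝ} (ht : 0 ≤ t) :
    t ^ (N - 1) / (N - 1).factorial ≤ zeta N t := by
  rw [zeta_eq_tsum]
  simpa using (summable_zeta_terms N t).le_tsum 0 fun k _ => by positivity

theorem mul_pow_div_factorial_le {v : ℝ} (hv : 0 ≤ v) (n : ℕ) :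
    v * (v ^ n / n.factorial) ≤ (2 * v) ^ (n + 1) / (n + 1).factorial := by
  have hn : ((n + 1 : ℕ) : ℝ) ≤ 2 ^ (n + 1) := mod_cast (n + 1).lt_two_pow_self.le
  rw [mul_div_assoc', ← pow_succ', Nat.factorial_succ, Nat.cast_mul, mul_pow,
    div_le_div_iff₀ (by positivity) (by positivity)]
  calc v ^ (n + 1) * ((n + 1 : ℕ) * n.factorial)
      ≤ v ^ (n + 1) * (2 ^ (n + 1) * n.factorial) := by gcongr
    _ = _ := by ring

theorem self_mul_zeta_le_zeta_two_mul {v : ℝ} (hv : 0 ≤ v) :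
    v * zeta N v ≤ zeta N (2 * v) := by
  rw [zeta_eq_tsum, zeta_eq_tsum, ← tsum_mul_left]
  calc ∑' k : ℕ, v * (v ^ (k + (N - 1)) / (k + (N - 1)).factorial)
      ≤ ∑' k : ℕ, (2 * v) ^ (k + 1 + (N - 1)) / (k + 1 + (N - 1)).factorial := by
        refine ((summable_zeta_terms N v).mul_left v).tsum_le_tsum (fun k => ?_)
          ((summable_nat_add_iff 1).2 (summable_zeta_terms N (2 * v)))
        rw [add_right_comm]
        exact mul_pow_div_factorial_le hv _
    _ ≤ _ := tsum_comp_le_tsum_of_inj (summable_zeta_terms N (2 * v)) (fun k => by positivity)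
        (add_left_injective 1)

theorem pow_le_mul_zeta {c v : ℝ} (hc : 0 < c) (hv : 0 ≤ v) :
    v ^ (N - 1) ≤ (N - 1).factorial / c ^ (N - 1) * zeta N (c * v) := by
  have h := pow_div_factorial_le_zeta N (mul_nonneg hc.le hv)
  rw [mul_pow, div_le_iff₀ (by positivity)] at h
  rw [div_mul_eq_mul_div, le_div_iff₀ (by positivity)]
  linarith

theorem one_add_mul_zeta_le {α u : ℝ} (hα : 0 < α) (hu : 0 ≤ u) :
    (1 + u) * zeta N (α * u) ≤ (1 + α⁻¹) * zeta N (2 * α * u) := by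
  have hαu : 0 ≤ α * u := mul_nonneg hα.le hu
  have hmono : zeta N (α * u) ≤ zeta N (2 * α * u) := zeta_le_zeta N hαu (by linarith)
  have hshift : u * zeta N (α * u) ≤ α⁻¹ * zeta N (2 * α * u) := by
    calc u * zeta N (α * u) = α⁻¹ * (α * u * zeta N (α * u)) := by field_simp
      _ ≤ α⁻¹ * zeta N (2 * (α * u)) := by gcongr; exact self_mul_zeta_le_zeta_two_mul N hαu
      _ = α⁻¹ * zeta N (2 * α * u) := by rw [mul_assoc]
  linarith

end Zeta

theorem mul_growth_le_mul_zeta {N : ℕ} (hN : 1 < N) {α b₁ b₂ s : ℝ} (hα : 0 < α)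
    (hb₁ : 0 ≤ b₁) (hb₂ : 0 ≤ b₂) (hs : 0 ≤ s) :
    s * (b₁ * s ^ (N - 1) + b₂ * zeta N (α * s ^ ((N : ℝ) / ((N : ℝ) - 1))))
      ≤ (b₁ * (N - 1).factorial / (2 * α) ^ (N - 1) + b₂ * (1 + α⁻¹))
        * zeta N (2 * α * s ^ ((N : ℝ) / ((N : ℝ) - 1))) := by
  set p : ℝ := (N : ℝ) / ((N : ℝ) - 1)
  have hp : 1 ≤ p := by
    have : (1 : ℝ) < N := mod_cast hN
    rw [le_div_iff₀ (by linarith)]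
    linarith
  have hu : 0 ≤ s ^ p := Real.rpow_nonneg hs p
  have hsN : s ^ N = s * s ^ (N - 1) := by
    rw [← pow_succ', Nat.sub_add_cancel hN.le]
  calc s * (b₁ * s ^ (N - 1) + b₂ * zeta N (α * s ^ p))
      = b₁ * (s ^ p) ^ (N - 1) + b₂ * (s * zeta N (α * s ^ p)) := by
        rw [rpow_div_sub_one_pow hN hs, hsN]
        ring
    _ ≤ b₁ * ((N - 1).factorial / (2 * α) ^ (N - 1) * zeta N (2 * α * s ^ p))
          + b₂ * ((1 + α⁻¹) * zeta N (2 * α * s ^ p)) := by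
        gcongr b₁ * ?_ + b₂ * ?_
        · exact pow_le_mul_zeta N (by positivity) hu
        · calc s * zeta N (α * s ^ p)
              ≤ (1 + s ^ p) * zeta N (α * s ^ p) := by
                gcongr
                · exact zeta_nonneg_s15 N (by positivity)
                · exact le_one_add_rpow hs hp
            _ ≤ _ := one_add_mul_zeta_le N hα hu
    _ = _ := by ring

theorem stmt15 (N : ℕ) (hN : 2 ≤ N) (α₀ b₁ b₂ : ℝ)
    (hα₀ : 0 < α₀) (hb₁ : 0 < b₁) (hb₂ : 0 < b₂)
    (f : EuclideanSpace ℝ (Fin N) → ℝ → ℝ) (hf : ∀ x, Continuous (f x))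
    (hgrowth : ∀ x, ∀ s : ℝ, 0 ≤ s →
      |f x s| ≤ b₁ * s ^ (N - 1) + b₂ * zeta N (α₀ * s ^ ((N : ℝ) / ((N : ℝ) - 1)))) :
    ∃ α₁ : ℝ, α₀ < α₁ ∧ ∃ b₃ : ℝ, 0 < b₃ ∧
      ∀ x, ∀ s : ℝ, 0 ≤ s →
        (∫ t in (0 : ℝ)..s, f x t) ≤ b₃ * zeta N (α₁ * s ^ ((N : ℝ) / ((N : ℝ) - 1))) := by
  refine ⟨2 * α₀, by linarith, b₁ * (N - 1).factorial / (2 * α₀) ^ (N - 1) + b₂ * (1 + α₀⁻¹),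
    by positivity, fun x s hs => ?_⟩
  have hp : 0 ≤ (N : ℝ) / ((N : ℝ) - 1) :=
    div_nonneg N.cast_nonneg (sub_nonneg.2 (mod_cast (by omega : 1 ≤ N)))
  have hbound : ∀ t ∈ Icc 0 s, f x t ≤
      b₁ * s ^ (N - 1) + b₂ * zeta N (α₀ * s ^ ((N : ℝ) / ((N : ℝ) - 1))) :=
    fun t ⟨ht, hts⟩ => (le_abs_self _).trans <| (hgrowth x t ht).trans <| by gcongr
  calc ∫ t in (0 : ℝ)..s, f x t
      ≤ s * (b₁ * s ^ (N - 1) + b₂ * zeta N (α₀ * s ^ ((N : ℝ) / ((N : ℝ) - 1)))) :=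
        intervalIntegral.integral_le_mul_of_forall_le hs ((hf x).intervalIntegrable 0 s) hbound
    _ ≤ _ := mul_growth_le_mul_zeta hN hα₀ hb₁.le hb₂.le hs
end
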